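/- The Pareto front of f = (f₁, f₂) has size exactly 2^k: the Pareto-optimal solutions are exactly the bitstrings x such that each block x_{B_b} equals either z¹ = 1^ℓ or z² = 1^{ℓ−r}0^r, and distinct such bitstrings have pairwise non-dominating (and distinct) objective vectors. -/

import Mathlib

set_option linter.unusedSectionVars false



/-- Number of leading positions on which `x` agrees with the target string `z`. -/
def LO (ℓ : ℕ) (z x : Fin ℓ → Bool) : ℕ :=
  (Finset.univ.filter (fun i : Fin ℓ => ∀ j ≤ i, x j = z j)).card

/-- The all-ones target string `z¹ = 1^ℓ`. -/
def zOne (ℓ : ℕ) : Fin ℓ → Bool := fun _ => true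

/-- The target string `z² = 1^{ℓ-r} 0^r`. -/
def zTwo (ℓ r : ℕ) : Fin ℓ → Bool := fun i => decide (i.val < ℓ - r)

/-- The first base function `f₁^B(w) = (ℓ+1)·LO_{z¹}(w) + LO_{z²}(w)`. -/
def f1B (ℓ r : ℕ) (w : Fin ℓ → Bool) : ℕ :=
  (ℓ + 1) * LO ℓ (zOne ℓ) w + LO ℓ (zTwo ℓ r) w

/-- The second base function `f₂^B(w) = (ℓ+1)·LO_{z²}(w) + LO_{z¹}(w)`. -/
def f2B (ℓ r : ℕ) (w : Fin ℓ → Bool) : ℕ :=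
  (ℓ + 1) * LO ℓ (zTwo ℓ r) w + LO ℓ (zOne ℓ) w

/-- The base functions indexed by `m : Fin 2` (`0` for `f₁^B`, `1` for `f₂^B`). -/
def fB (ℓ r : ℕ) (m : Fin 2) : (Fin ℓ → Bool) → ℕ :=
  if m = 0 then f1B ℓ r else f2B ℓ r

/-- The `b`-th block (0-based) of a bitstring of length `n = k·ℓ`. -/
def blockOf (k ℓ : ℕ) (x : Fin (k * ℓ) → Bool) (b : Fin k) : Fin ℓ → Bool :=
  fun j => x ⟨b.val * ℓ + j.val, by
    calc b.val * ℓ + j.val < b.val * ℓ + ℓ := Nat.add_lt_add_left j.isLt _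
      _ = (b.val + 1) * ℓ := by ring
      _ ≤ k * ℓ := Nat.mul_le_mul_right ℓ b.isLt⟩

/-- The full objective `f_m(x) = Σ_b (ℓ+1)^{2(k-b)} f_m^B(x_{B_b})` (with 0-based
block index `b`, so the paper's exponent `2(k-b)` becomes `2(k-1-b)`). -/
def fObj (k ℓ r : ℕ) (m : Fin 2) (x : Fin (k * ℓ) → Bool) : ℕ :=
  ∑ b : Fin k, (ℓ + 1) ^ (2 * (k - 1 - b.val)) * fB ℓ r m (blockOf k ℓ x b)

/-- `x` is Pareto optimal: no `y` strongly dominates `x`. -/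
def ParetoOptimal (k ℓ r : ℕ) (x : Fin (k * ℓ) → Bool) : Prop :=
  ¬ ∃ y : Fin (k * ℓ) → Bool,
      fObj k ℓ r 0 y ≥ fObj k ℓ r 0 x ∧ fObj k ℓ r 1 y ≥ fObj k ℓ r 1 x ∧
      (fObj k ℓ r 0 y > fObj k ℓ r 0 x ∨ fObj k ℓ r 1 y > fObj k ℓ r 1 x)


set_option linter.unusedSectionVars false

lemma LO_le (ℓ : ℕ) (z w : Fin ℓ → Bool) : LO ℓ z w ≤ ℓ := by
  classical
  calc (Finset.univ.filter (fun i : Fin ℓ => ∀ j ≤ i, w j = z j)).card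
      ≤ (Finset.univ : Finset (Fin ℓ)).card := Finset.card_filter_le _ _
    _ = ℓ := by simp

lemma LO_self (ℓ : ℕ) (z : Fin ℓ → Bool) : LO ℓ z z = ℓ := by
  classical
  unfold LO
  rw [Finset.filter_true_of_mem (by intro i _ j _; rfl)]
  simp

lemma eq_of_LO_eq (ℓ : ℕ) (z w : Fin ℓ → Bool) (h : LO ℓ z w = ℓ) : w = z := by
  classical
  have hu : (Finset.univ.filter (fun i : Fin ℓ => ∀ j ≤ i, w j = z j)) = Finset.univ := by
    apply Finset.eq_of_subset_of_card_le (Finset.filter_subset _ _)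
    show (Finset.univ : Finset (Fin ℓ)).card ≤ _
    rw [show (Finset.filter (fun i => ∀ j ≤ i, w j = z j) Finset.univ).card = ℓ from h]
    simp
  funext i
  have : i ∈ Finset.univ.filter (fun i : Fin ℓ => ∀ j ≤ i, w j = z j) := by
    rw [hu]; exact Finset.mem_univ i
  exact (Finset.mem_filter.1 this).2 i le_rfl

lemma agree_of_lt_LO (ℓ : ℕ) (z w : Fin ℓ → Bool) (t : ℕ) (ht : t < ℓ)
    (h : t < LO ℓ z w) : w ⟨t, ht⟩ = z ⟨t, ht⟩ := by
  classical
  by_contra hne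
  have hsub : (Finset.univ.filter (fun i : Fin ℓ => ∀ j ≤ i, w j = z j))
      ⊆ Finset.Iio (⟨t, ht⟩ : Fin ℓ) := by
    intro i hi
    rw [Finset.mem_filter] at hi
    rw [Finset.mem_Iio]
    by_contra hlt
    push_neg at hlt
    exact hne (hi.2 ⟨t, ht⟩ hlt)
  have := Finset.card_le_card hsub
  rw [Fin.card_Iio] at this
  unfold LO at h
  have h2 : ((⟨t, ht⟩ : Fin ℓ) : ℕ) = t := rfl
  omega

lemma LO_eq_of_lt (ℓ : ℕ) (z w : Fin ℓ → Bool) (m : ℕ) (hm : m < ℓ)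
    (hagree : ∀ j : Fin ℓ, j.val < m → w j = z j) (hne : w ⟨m, hm⟩ ≠ z ⟨m, hm⟩) :
    LO ℓ z w = m := by
  classical
  unfold LO
  have : (Finset.univ.filter (fun i : Fin ℓ => ∀ j ≤ i, w j = z j))
      = Finset.Iio (⟨m, hm⟩ : Fin ℓ) := by
    ext i
    simp only [Finset.mem_filter, Finset.mem_univ, true_and, Finset.mem_Iio]
    constructor
    · intro hi
      by_contra hlt
      push_neg at hlt
      exact hne (hi ⟨m, hm⟩ hlt)
    · intro hi j hj
      exact hagree j (lt_of_le_of_lt hj hi)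
  rw [this, Fin.card_Iio]

section vals
variable (ℓ r : ℕ) (hℓ : 0 < ℓ) (hr1 : 1 ≤ r) (hr : r ≤ ℓ)
include hℓ hr1 hr

lemma zOne_ne_zTwo : zOne ℓ ≠ zTwo ℓ r := by
  intro h
  have := congrFun h ⟨ℓ - r, by omega⟩
  simp [zOne, zTwo] at this

lemma LO_zOne_zTwo : LO ℓ (zOne ℓ) (zTwo ℓ r) = ℓ - r := by
  apply LO_eq_of_lt ℓ _ _ (ℓ - r) (by omega)
  · intro j hj
    simp [zOne, zTwo, hj]
  · simp [zOne, zTwo]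

lemma LO_zTwo_zOne : LO ℓ (zTwo ℓ r) (zOne ℓ) = ℓ - r := by
  apply LO_eq_of_lt ℓ _ _ (ℓ - r) (by omega)
  · intro j hj
    simp [zOne, zTwo, hj]
  · simp [zOne, zTwo]

lemma LO_min (w : Fin ℓ → Bool) :
    LO ℓ (zOne ℓ) w ≤ ℓ - r ∨ LO ℓ (zTwo ℓ r) w ≤ ℓ - r := by
  by_contra hc
  push_neg at hc
  have h1 := agree_of_lt_LO ℓ (zOne ℓ) w (ℓ - r) (by omega) hc.1
  have h2 := agree_of_lt_LO ℓ (zTwo ℓ r) w (ℓ - r) (by omega) hc.2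
  rw [h1] at h2
  simp [zOne, zTwo] at h2

end vals

section base
variable (ℓ r : ℕ) (hℓ : 0 < ℓ) (hr1 : 1 ≤ r) (hr : r ≤ ℓ)
include hℓ hr1 hr

lemma f1B_zOne : f1B ℓ r (zOne ℓ) = (ℓ + 1) * ℓ + (ℓ - r) := by
  simp only [f1B]
  rw [LO_self, LO_zTwo_zOne ℓ r hℓ hr1 hr]
lemma f2B_zOne : f2B ℓ r (zOne ℓ) = (ℓ + 1) * (ℓ - r) + ℓ := by
  simp only [f2B]
  rw [LO_self, LO_zTwo_zOne ℓ r hℓ hr1 hr]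
lemma f1B_zTwo : f1B ℓ r (zTwo ℓ r) = (ℓ + 1) * (ℓ - r) + ℓ := by
  simp only [f1B]
  rw [LO_self]
  rw [show LO ℓ (zOne ℓ) (zTwo ℓ r) = ℓ - r from LO_zOne_zTwo ℓ r hℓ hr1 hr]
lemma f2B_zTwo : f2B ℓ r (zTwo ℓ r) = (ℓ + 1) * ℓ + (ℓ - r) := by
  simp only [f2B]
  rw [LO_self, LO_zOne_zTwo ℓ r hℓ hr1 hr]

lemma f1B_le_A (w : Fin ℓ → Bool) : f1B ℓ r w ≤ (ℓ + 1) * ℓ + (ℓ - r) := by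
  have ha := LO_le ℓ (zOne ℓ) w
  have hc := LO_le ℓ (zTwo ℓ r) w
  rcases LO_min ℓ r hℓ hr1 hr w with h | h
  · calc f1B ℓ r w ≤ (ℓ + 1) * (ℓ - r) + ℓ :=
        Nat.add_le_add (Nat.mul_le_mul_left _ h) hc
      _ ≤ (ℓ + 1) * ℓ + (ℓ - r) := by nlinarith [Nat.sub_le ℓ r]
  · exact Nat.add_le_add (Nat.mul_le_mul_left _ ha) h

lemma f2B_le_A (w : Fin ℓ → Bool) : f2B ℓ r w ≤ (ℓ + 1) * ℓ + (ℓ - r) := by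
  have ha := LO_le ℓ (zOne ℓ) w
  have hc := LO_le ℓ (zTwo ℓ r) w
  rcases LO_min ℓ r hℓ hr1 hr w with h | h
  · exact Nat.add_le_add (Nat.mul_le_mul_left _ hc) h
  · calc f2B ℓ r w ≤ (ℓ + 1) * (ℓ - r) + ℓ :=
        Nat.add_le_add (Nat.mul_le_mul_left _ h) ha
      _ ≤ (ℓ + 1) * ℓ + (ℓ - r) := by nlinarith [Nat.sub_le ℓ r]

lemma f1B_lt_sq (w : Fin ℓ → Bool) : f1B ℓ r w < (ℓ + 1) ^ 2 := by
  have ha := LO_le ℓ (zOne ℓ) w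
  have hc := LO_le ℓ (zTwo ℓ r) w
  have : f1B ℓ r w ≤ (ℓ + 1) * ℓ + ℓ := Nat.add_le_add (Nat.mul_le_mul_left _ ha) hc
  nlinarith

lemma f2B_lt_sq (w : Fin ℓ → Bool) : f2B ℓ r w < (ℓ + 1) ^ 2 := by
  have ha := LO_le ℓ (zOne ℓ) w
  have hc := LO_le ℓ (zTwo ℓ r) w
  have : f2B ℓ r w ≤ (ℓ + 1) * ℓ + ℓ := Nat.add_le_add (Nat.mul_le_mul_left _ hc) ha
  nlinarith

lemma f2B_le_B_of_ge (w : Fin ℓ → Bool) (h : f2B ℓ r w ≤ f1B ℓ r w) :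
    f2B ℓ r w ≤ (ℓ + 1) * (ℓ - r) + ℓ := by
  have ha := LO_le ℓ (zOne ℓ) w
  have hc := LO_le ℓ (zTwo ℓ r) w
  simp only [f1B, f2B] at h ⊢
  have hca : LO ℓ (zTwo ℓ r) w ≤ LO ℓ (zOne ℓ) w := by nlinarith
  have hcb : LO ℓ (zTwo ℓ r) w ≤ ℓ - r := by
    rcases LO_min ℓ r hℓ hr1 hr w with h' | h' <;> omega
  exact Nat.add_le_add (Nat.mul_le_mul_left _ hcb) ha

lemma f1B_le_B_of_ge (w : Fin ℓ → Bool) (h : f1B ℓ r w ≤ f2B ℓ r w) :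
    f1B ℓ r w ≤ (ℓ + 1) * (ℓ - r) + ℓ := by
  have ha := LO_le ℓ (zOne ℓ) w
  have hc := LO_le ℓ (zTwo ℓ r) w
  simp only [f1B, f2B] at h ⊢
  have hca : LO ℓ (zOne ℓ) w ≤ LO ℓ (zTwo ℓ r) w := by nlinarith
  have hcb : LO ℓ (zOne ℓ) w ≤ ℓ - r := by
    rcases LO_min ℓ r hℓ hr1 hr w with h' | h' <;> omega
  exact Nat.add_le_add (Nat.mul_le_mul_left _ hcb) hc

lemma fB_sum_le (w : Fin ℓ → Bool) :
    f1B ℓ r w + f2B ℓ r w ≤ ((ℓ + 1) * ℓ + (ℓ - r)) + ((ℓ + 1) * (ℓ - r) + ℓ) := by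
  have ha := LO_le ℓ (zOne ℓ) w
  have hc := LO_le ℓ (zTwo ℓ r) w
  have hm := LO_min ℓ r hℓ hr1 hr w
  simp only [f1B, f2B]
  have hs : LO ℓ (zOne ℓ) w + LO ℓ (zTwo ℓ r) w ≤ ℓ + (ℓ - r) := by omega
  nlinarith

lemma fB_sum_lt (w : Fin ℓ → Bool) (h1 : w ≠ zOne ℓ) (h2 : w ≠ zTwo ℓ r) :
    f1B ℓ r w + f2B ℓ r w < ((ℓ + 1) * ℓ + (ℓ - r)) + ((ℓ + 1) * (ℓ - r) + ℓ) := by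
  have ha := LO_le ℓ (zOne ℓ) w
  have hc := LO_le ℓ (zTwo ℓ r) w
  have hm := LO_min ℓ r hℓ hr1 hr w
  have ha' : LO ℓ (zOne ℓ) w ≠ ℓ := fun hh => h1 (eq_of_LO_eq ℓ _ _ hh)
  have hc' : LO ℓ (zTwo ℓ r) w ≠ ℓ := fun hh => h2 (eq_of_LO_eq ℓ _ _ hh)
  simp only [f1B, f2B]
  have hs : LO ℓ (zOne ℓ) w + LO ℓ (zTwo ℓ r) w + 1 ≤ ℓ + (ℓ - r) := by omega
  nlinarith

end base

lemma sum_digits_lt (q : ℕ) : ∀ (k : ℕ) (d : Fin k → ℕ),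
    (∀ b, d b < q ^ 2) → ∑ b : Fin k, q ^ (2 * (k - 1 - b.val)) * d b < q ^ (2 * k)
  | 0, d, hd => by simp
  | (k + 1), d, hd => by
    have hq : 0 < q := by
      have h0 := hd 0
      rcases Nat.eq_zero_or_pos q with rfl | h
      · simp at h0
      · exact h
    rw [Fin.sum_univ_succ]
    have htail : ∑ b : Fin k, q ^ (2 * (k + 1 - 1 - (b.succ : Fin (k+1)).val)) * d b.succ
        = ∑ b : Fin k, q ^ (2 * (k - 1 - b.val)) * d b.succ := by
      apply Finset.sum_congr rfl
      intro b _
      congr 2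
      have := b.isLt
      simp only [Fin.val_succ]
      omega
    rw [htail]
    have ih := sum_digits_lt q k (fun b => d b.succ) (fun b => hd b.succ)
    have h0 : (0 : Fin (k+1)).val = 0 := rfl
    rw [h0]
    have hd0 : d 0 + 1 ≤ q ^ 2 := hd 0
    calc q ^ (2 * (k + 1 - 1 - 0)) * d 0 + ∑ b : Fin k, q ^ (2 * (k - 1 - b.val)) * d b.succ
        < q ^ (2 * k) * d 0 + q ^ (2 * k) := by
          rw [show k + 1 - 1 - 0 = k from rfl]
          exact Nat.add_lt_add_left ih _
      _ = q ^ (2 * k) * (d 0 + 1) := by ring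
      _ ≤ q ^ (2 * k) * q ^ 2 := Nat.mul_le_mul_left _ hd0
      _ = q ^ (2 * (k + 1)) := by rw [← pow_add]; ring_nf

lemma digits_eq_of_sum_eq (q : ℕ) (hq : 0 < q) : ∀ (k : ℕ) (d e : Fin k → ℕ),
    (∀ b, d b < q ^ 2) → (∀ b, e b < q ^ 2) →
    (∑ b : Fin k, q ^ (2 * (k - 1 - b.val)) * d b = ∑ b : Fin k, q ^ (2 * (k - 1 - b.val)) * e b) →
    ∀ b, d b = e b
  | 0, d, e, hd, he, h => fun b => absurd b.isLt (by omega)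
  | (k + 1), d, e, hd, he, h => by
    have reshape : ∀ (f : Fin (k+1) → ℕ),
        ∑ b : Fin (k+1), q ^ (2 * (k + 1 - 1 - b.val)) * f b
        = q ^ (2 * k) * f 0 + ∑ b : Fin k, q ^ (2 * (k - 1 - b.val)) * f b.succ := by
      intro f
      rw [Fin.sum_univ_succ]
      congr 1
      apply Finset.sum_congr rfl
      intro b _
      congr 2
      have := b.isLt
      simp only [Fin.val_succ]
      omega
    rw [reshape d, reshape e] at h
    have htd := sum_digits_lt q k (fun b => d b.succ) (fun b => hd b.succ)
    have hte := sum_digits_lt q k (fun b => e b.succ) (fun b => he b.succ)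
    beta_reduce at htd hte
    have hP : 0 < q ^ (2 * k) := pow_pos hq _
    have h0 : d 0 = e 0 := by
      rcases Nat.lt_trichotomy (d 0) (e 0) with hlt | heq | hgt
      · exfalso
        have : q ^ (2 * k) * d 0 + q ^ (2 * k) ≤ q ^ (2 * k) * e 0 :=
          by calc q ^ (2 * k) * d 0 + q ^ (2 * k) = q ^ (2 * k) * (d 0 + 1) := by ring
            _ ≤ q ^ (2 * k) * e 0 := Nat.mul_le_mul_left _ hlt
        omega
      · exact heq
      · exfalso
        have : q ^ (2 * k) * e 0 + q ^ (2 * k) ≤ q ^ (2 * k) * d 0 :=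
          by calc q ^ (2 * k) * e 0 + q ^ (2 * k) = q ^ (2 * k) * (e 0 + 1) := by ring
            _ ≤ q ^ (2 * k) * d 0 := Nat.mul_le_mul_left _ hgt
        omega
    have htails : ∑ b : Fin k, q ^ (2 * (k - 1 - b.val)) * d b.succ
        = ∑ b : Fin k, q ^ (2 * (k - 1 - b.val)) * e b.succ := by
      rw [h0] at h; omega
    have ih := digits_eq_of_sum_eq q hq k (fun b => d b.succ) (fun b => e b.succ)
      (fun b => hd b.succ) (fun b => he b.succ) htails
    intro b
    rcases Fin.eq_zero_or_eq_succ b with rfl | ⟨b', rfl⟩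
    · exact h0
    · exact ih b'

lemma fB_zero (ℓ r : ℕ) : fB ℓ r 0 = f1B ℓ r := by simp [fB]
lemma fB_one (ℓ r : ℕ) : fB ℓ r 1 = f2B ℓ r := by simp [fB]

def xof (k ℓ r : ℕ) (c : Fin k → Bool) : Fin (k * ℓ) → Bool :=
  fun i => if c ⟨i.val / ℓ, by
      rcases Nat.eq_zero_or_pos ℓ with h0 | h0
      · exact absurd i.isLt (by simp [h0])
      · exact (Nat.div_lt_iff_lt_mul h0).2 i.isLt⟩
    then true else decide (i.val % ℓ < ℓ - r)

lemma blockOf_xof (k ℓ r : ℕ) (hℓ : 0 < ℓ) (c : Fin k → Bool) (b : Fin k) :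
    blockOf k ℓ (xof k ℓ r c) b = if c b then zOne ℓ else zTwo ℓ r := by
  funext j
  have hdiv : (b.val * ℓ + j.val) / ℓ = b.val := by
    rw [Nat.add_comm, Nat.add_mul_div_right _ _ hℓ, Nat.div_eq_of_lt j.isLt]
    omega
  have hmod : (b.val * ℓ + j.val) % ℓ = j.val := by
    rw [Nat.add_comm, Nat.add_mul_mod_self_right, Nat.mod_eq_of_lt j.isLt]
  simp only [blockOf, xof]
  have hb : (⟨(b.val * ℓ + j.val) / ℓ, by omega⟩ : Fin k) = b := Fin.ext hdiv
  rw [hb, hmod]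
  by_cases hc : c b
  · simp [hc, zOne]
  · simp [hc, zTwo]

lemma eq_of_blocks_eq (k ℓ : ℕ) (x y : Fin (k * ℓ) → Bool)
    (h : ∀ b, blockOf k ℓ x b = blockOf k ℓ y b) : x = y := by
  funext i
  have hℓ : 0 < ℓ := by
    rcases Nat.eq_zero_or_pos ℓ with h0 | h0
    · exact absurd i.isLt (by simp [h0])
    · exact h0
  have hd : i.val / ℓ < k := (Nat.div_lt_iff_lt_mul hℓ).2 i.isLt
  have hm : i.val % ℓ < ℓ := Nat.mod_lt _ hℓ
  have := congrFun (h ⟨i.val / ℓ, hd⟩) ⟨i.val % ℓ, hm⟩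
  simp only [blockOf] at this
  have hidx : i.val / ℓ * ℓ + i.val % ℓ = i.val := by
    rw [Nat.mul_comm, Nat.div_add_mod]
  convert this using 2 <;> exact (Fin.ext hidx.symm)

section glob
set_option linter.unusedSectionVars false
variable (k ℓ r : ℕ) (hk : 0 < k) (hℓ : 0 < ℓ) (hr1 : 1 ≤ r) (hr : r ≤ ℓ)
include hk hℓ hr1 hr

lemma fObj_congr (m : Fin 2) (x y : Fin (k * ℓ) → Bool)
    (h : ∀ b, blockOf k ℓ x b = blockOf k ℓ y b) : fObj k ℓ r m x = fObj k ℓ r m y :=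
  Finset.sum_congr rfl (fun b _ => by rw [h b])

lemma fObj_add (x : Fin (k * ℓ) → Bool) :
    fObj k ℓ r 0 x + fObj k ℓ r 1 x
      = ∑ b : Fin k, (ℓ + 1) ^ (2 * (k - 1 - b.val)) *
          (f1B ℓ r (blockOf k ℓ x b) + f2B ℓ r (blockOf k ℓ x b)) := by
  unfold fObj
  rw [fB_zero, fB_one, ← Finset.sum_add_distrib]
  exact Finset.sum_congr rfl (fun b _ => by ring)

lemma good_sum (x : Fin (k * ℓ) → Bool)
    (hx : ∀ b, blockOf k ℓ x b = zOne ℓ ∨ blockOf k ℓ x b = zTwo ℓ r) :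
    fObj k ℓ r 0 x + fObj k ℓ r 1 x
      = ∑ b : Fin k, (ℓ + 1) ^ (2 * (k - 1 - b.val)) *
          (((ℓ + 1) * ℓ + (ℓ - r)) + ((ℓ + 1) * (ℓ - r) + ℓ)) := by
  rw [fObj_add k ℓ r hk hℓ hr1 hr]
  apply Finset.sum_congr rfl
  intro b _
  rcases hx b with h | h <;> rw [h]
  · rw [f1B_zOne ℓ r hℓ hr1 hr, f2B_zOne ℓ r hℓ hr1 hr]
  · rw [f1B_zTwo ℓ r hℓ hr1 hr, f2B_zTwo ℓ r hℓ hr1 hr]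
    ring

lemma fObj_add_le (x : Fin (k * ℓ) → Bool) :
    fObj k ℓ r 0 x + fObj k ℓ r 1 x
      ≤ ∑ b : Fin k, (ℓ + 1) ^ (2 * (k - 1 - b.val)) *
          (((ℓ + 1) * ℓ + (ℓ - r)) + ((ℓ + 1) * (ℓ - r) + ℓ)) := by
  rw [fObj_add k ℓ r hk hℓ hr1 hr]
  exact Finset.sum_le_sum (fun b _ =>
    Nat.mul_le_mul_left _ (fB_sum_le ℓ r hℓ hr1 hr _))

lemma pareto_of_good (x : Fin (k * ℓ) → Bool)
    (hx : ∀ b, blockOf k ℓ x b = zOne ℓ ∨ blockOf k ℓ x b = zTwo ℓ r) :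
    ¬ ∃ y : Fin (k * ℓ) → Bool,
      fObj k ℓ r 0 y ≥ fObj k ℓ r 0 x ∧ fObj k ℓ r 1 y ≥ fObj k ℓ r 1 x ∧
      (fObj k ℓ r 0 y > fObj k ℓ r 0 x ∨ fObj k ℓ r 1 y > fObj k ℓ r 1 x) := by
  rintro ⟨y, h0, h1, hs⟩
  have hy := fObj_add_le k ℓ r hk hℓ hr1 hr y
  rw [← good_sum k ℓ r hk hℓ hr1 hr x hx] at hy
  omega

lemma A_ne_B : ((ℓ + 1) * ℓ + (ℓ - r)) ≠ ((ℓ + 1) * (ℓ - r) + ℓ) := by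
  have hs : ℓ - r + r = ℓ := by omega
  intro h
  nlinarith [h, hs]

lemma eq_of_fObj0_eq (x y : Fin (k * ℓ) → Bool)
    (hx : ∀ b, blockOf k ℓ x b = zOne ℓ ∨ blockOf k ℓ x b = zTwo ℓ r)
    (hy : ∀ b, blockOf k ℓ y b = zOne ℓ ∨ blockOf k ℓ y b = zTwo ℓ r)
    (h : fObj k ℓ r 0 x = fObj k ℓ r 0 y) : x = y := by
  have hdig := digits_eq_of_sum_eq (ℓ + 1) (by omega) k
    (fun b => f1B ℓ r (blockOf k ℓ x b)) (fun b => f1B ℓ r (blockOf k ℓ y b))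
    (fun b => f1B_lt_sq ℓ r hℓ hr1 hr _) (fun b => f1B_lt_sq ℓ r hℓ hr1 hr _)
    (by unfold fObj at h; rw [fB_zero] at h; exact h)
  apply eq_of_blocks_eq
  intro b
  have hb := hdig b
  rcases hx b with h1 | h1 <;> rcases hy b with h2 | h2 <;> rw [h1, h2] <;>
    rw [h1, h2] at hb
  · rw [f1B_zOne ℓ r hℓ hr1 hr, f1B_zTwo ℓ r hℓ hr1 hr] at hb
    exact absurd hb (A_ne_B k ℓ r hk hℓ hr1 hr)
  · rw [f1B_zOne ℓ r hℓ hr1 hr, f1B_zTwo ℓ r hℓ hr1 hr] at hb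
    exact absurd hb.symm (A_ne_B k ℓ r hk hℓ hr1 hr)

end glob

section glob2
set_option linter.unusedSectionVars false
variable (k ℓ r : ℕ) (hk : 0 < k) (hℓ : 0 < ℓ) (hr1 : 1 ≤ r) (hr : r ≤ ℓ)
include hk hℓ hr1 hr

lemma dominated_of_not_good (x : Fin (k * ℓ) → Bool) (b₀ : Fin k)
    (hb1 : blockOf k ℓ x b₀ ≠ zOne ℓ) (hb2 : blockOf k ℓ x b₀ ≠ zTwo ℓ r) :
    ∃ y : Fin (k * ℓ) → Bool,
      fObj k ℓ r 0 y ≥ fObj k ℓ r 0 x ∧ fObj k ℓ r 1 y ≥ fObj k ℓ r 1 x ∧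
      (fObj k ℓ r 0 y > fObj k ℓ r 0 x ∨ fObj k ℓ r 1 y > fObj k ℓ r 1 x) := by
  classical
  set c : Fin k → Bool :=
    fun b => decide (f2B ℓ r (blockOf k ℓ x b) ≤ f1B ℓ r (blockOf k ℓ x b)) with hc
  refine ⟨xof k ℓ r c, ?_⟩
  have hyb : ∀ b, blockOf k ℓ (xof k ℓ r c) b = if c b then zOne ℓ else zTwo ℓ r :=
    blockOf_xof k ℓ r hℓ c
  have h1b : ∀ b, f1B ℓ r (blockOf k ℓ x b) ≤ f1B ℓ r (blockOf k ℓ (xof k ℓ r c) b) := by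
    intro b
    rw [hyb b]
    by_cases h : f2B ℓ r (blockOf k ℓ x b) ≤ f1B ℓ r (blockOf k ℓ x b)
    · rw [show (if c b then zOne ℓ else zTwo ℓ r) = zOne ℓ by simp [hc, h]]
      rw [f1B_zOne ℓ r hℓ hr1 hr]
      exact f1B_le_A ℓ r hℓ hr1 hr _
    · rw [show (if c b then zOne ℓ else zTwo ℓ r) = zTwo ℓ r by simp [hc, h]]
      rw [f1B_zTwo ℓ r hℓ hr1 hr]
      exact f1B_le_B_of_ge ℓ r hℓ hr1 hr _ (by omega)
  have h2b : ∀ b, f2B ℓ r (blockOf k ℓ x b) ≤ f2B ℓ r (blockOf k ℓ (xof k ℓ r c) b) := by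
    intro b
    rw [hyb b]
    by_cases h : f2B ℓ r (blockOf k ℓ x b) ≤ f1B ℓ r (blockOf k ℓ x b)
    · rw [show (if c b then zOne ℓ else zTwo ℓ r) = zOne ℓ by simp [hc, h]]
      rw [f2B_zOne ℓ r hℓ hr1 hr]
      exact f2B_le_B_of_ge ℓ r hℓ hr1 hr _ h
    · rw [show (if c b then zOne ℓ else zTwo ℓ r) = zTwo ℓ r by simp [hc, h]]
      rw [f2B_zTwo ℓ r hℓ hr1 hr]
      exact f2B_le_A ℓ r hℓ hr1 hr _
  have h0 : fObj k ℓ r 0 x ≤ fObj k ℓ r 0 (xof k ℓ r c) := by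
    unfold fObj
    rw [fB_zero]
    exact Finset.sum_le_sum (fun b _ => Nat.mul_le_mul_left _ (h1b b))
  have h1 : fObj k ℓ r 1 x ≤ fObj k ℓ r 1 (xof k ℓ r c) := by
    unfold fObj
    rw [fB_one]
    exact Finset.sum_le_sum (fun b _ => Nat.mul_le_mul_left _ (h2b b))
  have hstrict : fObj k ℓ r 0 x + fObj k ℓ r 1 x
      < fObj k ℓ r 0 (xof k ℓ r c) + fObj k ℓ r 1 (xof k ℓ r c) := by
    rw [fObj_add k ℓ r hk hℓ hr1 hr, fObj_add k ℓ r hk hℓ hr1 hr]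
    apply Finset.sum_lt_sum
    · exact fun b _ => Nat.mul_le_mul_left _ (Nat.add_le_add (h1b b) (h2b b))
    · refine ⟨b₀, Finset.mem_univ _, ?_⟩
      have hpos : 0 < (ℓ + 1) ^ (2 * (k - 1 - b₀.val)) := pow_pos (by omega) _
      refine mul_lt_mul_of_pos_left ?_ hpos
      have hlt := fB_sum_lt ℓ r hℓ hr1 hr _ hb1 hb2
      have hub : f1B ℓ r (blockOf k ℓ (xof k ℓ r c) b₀)
          + f2B ℓ r (blockOf k ℓ (xof k ℓ r c) b₀)
          = ((ℓ + 1) * ℓ + (ℓ - r)) + ((ℓ + 1) * (ℓ - r) + ℓ) := by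
        rw [hyb b₀]
        by_cases h : c b₀ = true
        · rw [if_pos h, f1B_zOne ℓ r hℓ hr1 hr, f2B_zOne ℓ r hℓ hr1 hr]
        · rw [if_neg h, f1B_zTwo ℓ r hℓ hr1 hr, f2B_zTwo ℓ r hℓ hr1 hr]
          ring
      omega
  exact ⟨h0, h1, by omega⟩

lemma xof_good (c : Fin k → Bool) :
    ∀ b, blockOf k ℓ (xof k ℓ r c) b = zOne ℓ ∨ blockOf k ℓ (xof k ℓ r c) b = zTwo ℓ r := by
  intro b
  rw [blockOf_xof k ℓ r hℓ c b]
  by_cases h : c b = true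
  · left; rw [if_pos h]
  · right; rw [if_neg h]

lemma xof_inj (c c' : Fin k → Bool) (h : xof k ℓ r c = xof k ℓ r c') : c = c' := by
  funext b
  have := congrFun (congrArg (blockOf k ℓ) h) b
  rw [blockOf_xof k ℓ r hℓ c b, blockOf_xof k ℓ r hℓ c' b] at this
  by_cases h1 : c b = true <;> by_cases h2 : c' b = true
  · rw [h1, h2]
  · rw [if_pos h1, if_neg h2] at this
    exact absurd this (zOne_ne_zTwo ℓ r hℓ hr1 hr)
  · rw [if_neg h1, if_pos h2] at this
    exact absurd this.symm (zOne_ne_zTwo ℓ r hℓ hr1 hr)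
  · simp only [Bool.not_eq_true] at h1 h2
    rw [h1, h2]

end glob2


/-- The Pareto-optimal solutions are exactly the bitstrings whose
blocks all equal `z¹` or `z²`; distinct such bitstrings have distinct, mutually
non-dominating objective vectors; and the Pareto front has size exactly `2^k`. -/
theorem stmt_12 (k ℓ r : ℕ) (hk : 0 < k) (hℓ : 0 < ℓ) (hr1 : 1 ≤ r) (hr : r ≤ ℓ) :
    (∀ x : Fin (k * ℓ) → Bool,
        ParetoOptimal k ℓ r x ↔ ∀ b : Fin k, blockOf k ℓ x b = zOne ℓ ∨ blockOf k ℓ x b = zTwo ℓ r) ∧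
    (∀ x y : Fin (k * ℓ) → Bool,
        (∀ b : Fin k, blockOf k ℓ x b = zOne ℓ ∨ blockOf k ℓ x b = zTwo ℓ r) →
        (∀ b : Fin k, blockOf k ℓ y b = zOne ℓ ∨ blockOf k ℓ y b = zTwo ℓ r) →
        x ≠ y →
          (fObj k ℓ r 0 x, fObj k ℓ r 1 x) ≠ (fObj k ℓ r 0 y, fObj k ℓ r 1 y) ∧
          ¬(fObj k ℓ r 0 x ≥ fObj k ℓ r 0 y ∧ fObj k ℓ r 1 x ≥ fObj k ℓ r 1 y)) ∧
    Set.ncard {p : ℕ × ℕ | ∃ x : Fin (k * ℓ) → Bool,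
        ParetoOptimal k ℓ r x ∧ p = (fObj k ℓ r 0 x, fObj k ℓ r 1 x)} = 2 ^ k := by
  classical
  have part1 : ∀ x : Fin (k * ℓ) → Bool, ParetoOptimal k ℓ r x ↔
      ∀ b : Fin k, blockOf k ℓ x b = zOne ℓ ∨ blockOf k ℓ x b = zTwo ℓ r := by
    intro x
    constructor
    · intro hp
      by_contra hng
      push_neg at hng
      obtain ⟨b₀, hb⟩ := hng
      exact hp (dominated_of_not_good k ℓ r hk hℓ hr1 hr x b₀ hb.1 hb.2)
    · intro hx
      exact pareto_of_good k ℓ r hk hℓ hr1 hr x hx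
  have part2 : ∀ x y : Fin (k * ℓ) → Bool,
      (∀ b : Fin k, blockOf k ℓ x b = zOne ℓ ∨ blockOf k ℓ x b = zTwo ℓ r) →
      (∀ b : Fin k, blockOf k ℓ y b = zOne ℓ ∨ blockOf k ℓ y b = zTwo ℓ r) →
      x ≠ y →
        (fObj k ℓ r 0 x, fObj k ℓ r 1 x) ≠ (fObj k ℓ r 0 y, fObj k ℓ r 1 y) ∧
        ¬(fObj k ℓ r 0 x ≥ fObj k ℓ r 0 y ∧ fObj k ℓ r 1 x ≥ fObj k ℓ r 1 y) := by
    intro x y hx hy hxy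
    have hsum : fObj k ℓ r 0 x + fObj k ℓ r 1 x = fObj k ℓ r 0 y + fObj k ℓ r 1 y := by
      rw [good_sum k ℓ r hk hℓ hr1 hr x hx, good_sum k ℓ r hk hℓ hr1 hr y hy]
    constructor
    · intro hpair
      have h0 : fObj k ℓ r 0 x = fObj k ℓ r 0 y := congrArg Prod.fst hpair
      exact hxy (eq_of_fObj0_eq k ℓ r hk hℓ hr1 hr x y hx hy h0)
    · rintro ⟨g0, g1⟩
      have h0 : fObj k ℓ r 0 x = fObj k ℓ r 0 y := by omega
      exact hxy (eq_of_fObj0_eq k ℓ r hk hℓ hr1 hr x y hx hy h0)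
  refine ⟨part1, part2, ?_⟩
  set g : (Fin k → Bool) → ℕ × ℕ :=
    fun c => (fObj k ℓ r 0 (xof k ℓ r c), fObj k ℓ r 1 (xof k ℓ r c)) with hg
  have hginj : Function.Injective g := by
    intro c c' h
    have h0 : fObj k ℓ r 0 (xof k ℓ r c) = fObj k ℓ r 0 (xof k ℓ r c') :=
      congrArg Prod.fst h
    have := eq_of_fObj0_eq k ℓ r hk hℓ hr1 hr _ _
      (xof_good k ℓ r hk hℓ hr1 hr c) (xof_good k ℓ r hk hℓ hr1 hr c') h0
    exact xof_inj k ℓ r hk hℓ hr1 hr c c' this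
  have hSeq : {p : ℕ × ℕ | ∃ x : Fin (k * ℓ) → Bool,
        ParetoOptimal k ℓ r x ∧ p = (fObj k ℓ r 0 x, fObj k ℓ r 1 x)} = Set.range g := by
    ext p
    simp only [Set.mem_setOf_eq, Set.mem_range, hg]
    constructor
    · rintro ⟨x, hp, rfl⟩
      have hx := (part1 x).1 hp
      refine ⟨fun b => decide (blockOf k ℓ x b = zOne ℓ), ?_⟩
      have hblocks : ∀ b, blockOf k ℓ
          (xof k ℓ r (fun b => decide (blockOf k ℓ x b = zOne ℓ))) b = blockOf k ℓ x b := by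
        intro b
        rw [blockOf_xof k ℓ r hℓ _ b]
        rcases hx b with h | h
        · rw [if_pos (by simp [h]), h]
        · rw [if_neg (by
            simp only [h, decide_eq_true_eq]
            exact fun hh => zOne_ne_zTwo ℓ r hℓ hr1 hr hh.symm), h]
      rw [fObj_congr k ℓ r hk hℓ hr1 hr 0 _ x hblocks,
        fObj_congr k ℓ r hk hℓ hr1 hr 1 _ x hblocks]
    · rintro ⟨c, rfl⟩
      exact ⟨xof k ℓ r c, (part1 _).2 (xof_good k ℓ r hk hℓ hr1 hr c), rfl⟩
  rw [hSeq, ← Set.image_univ, Set.ncard_image_of_injective _ hginj, Set.ncard_univ]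
  simp [Nat.card_eq_fintype_card]
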